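/- arXiv:2111.06556 — 7 statements merged into one kernel-verified Lean document; each statement's English description precedes it below -/
import Mathlib

section
/- If N ∪ {t} is a (1,k)-configuration for the knapsack constraint aᵀx ≤ b, and S ⊆ N with |S| ≥ k, then every x ∈ {0,1}ⁿ with aᵀx ≤ b satisfies (|S| - k + 1)·x_t + ∑_{i∈S} x_i ≤ |S|. -/
open Finset

theorem config_inequality_valid {n : ℕ} (a : Fin n → ℤ) (ha : ∀ i, 0 ≤ a i)
    (b : ℤ) (hb : 0 ≤ b)
    (N : Finset (Fin n)) (t : Fin n) (ht : t ∉ N) (hNproper : N ≠ Finset.univ)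
    (k : ℕ) (hk2 : 2 ≤ k) (hkN : k ≤ N.card)
    (hNb : ∑ i ∈ N, a i ≤ b)
    (hconfig : ∀ Q ⊆ N, Q.card = k →
      (b < ∑ i ∈ insert t Q, a i ∧
        ∀ j ∈ insert t Q, ∑ i ∈ (insert t Q).erase j, a i ≤ b))
    (S : Finset (Fin n)) (hS : S ⊆ N) (hSk : k ≤ S.card)
    (x : Fin n → ℤ) (hx : ∀ i, x i = 0 ∨ x i = 1)
    (hfeas : ∑ i, a i * x i ≤ b) :
    ((S.card : ℤ) - k + 1) * x t + ∑ i ∈ S, x i ≤ (S.card : ℤ) := by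
  have hx0 : ∀ i, 0 ≤ x i := fun i => by rcases hx i with h | h <;> simp [h]
  have hx1 : ∀ i, x i ≤ 1 := fun i => by rcases hx i with h | h <;> simp [h]
  have hSsum : ∑ i ∈ S, x i ≤ (S.card : ℤ) := by
    calc ∑ i ∈ S, x i ≤ ∑ i ∈ S, (1 : ℤ) := Finset.sum_le_sum fun i _ => hx1 i
    _ = S.card := by simp
  rcases hx t with hxt | hxt
  · rw [hxt]; linarith
  · rw [hxt, mul_one]
    set T := S.filter (fun i => x i = 1) with hT
    have hsumT : ∑ i ∈ S, x i = (T.card : ℤ) := by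
      rw [← Finset.sum_filter_add_sum_filter_not S (fun i => x i = 1)]
      have h1 : ∑ i ∈ S.filter (fun i => x i = 1), x i = (T.card : ℤ) := by
        rw [Finset.sum_congr rfl (fun i hi => (Finset.mem_filter.mp hi).2)]
        simp [hT]
      have h2 : ∑ i ∈ S.filter (fun i => ¬ x i = 1), x i = 0 := by
        apply Finset.sum_eq_zero
        intro i hi
        rcases hx i with h | h
        · exact h
        · exact absurd h (Finset.mem_filter.mp hi).2
      rw [h1, h2]; ring
    by_cases hTk : T.card ≤ k - 1
    · have : (T.card : ℤ) ≤ (k : ℤ) - 1 := by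
        have : (T.card : ℤ) ≤ ((k - 1 : ℕ) : ℤ) := by exact_mod_cast hTk
        omega
      rw [hsumT]; linarith
    · exfalso
      have hkT : k ≤ T.card := by omega
      obtain ⟨Q, hQT, hQcard⟩ := Finset.exists_subset_card_eq hkT
      have hTS : T ⊆ S := Finset.filter_subset _ _
      have hQN : Q ⊆ N := hQT.trans (hTS.trans hS)
      have htQ : t ∉ Q := fun h => ht (hQN h)
      obtain ⟨hlt, _⟩ := hconfig Q hQN hQcard
      have hsub : insert t Q ⊆ Finset.univ := Finset.subset_univ _
      have hle : ∑ i ∈ insert t Q, a i * x i ≤ ∑ i, a i * x i :=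
        Finset.sum_le_sum_of_subset_of_nonneg hsub
          (fun i _ _ => mul_nonneg (ha i) (hx0 i))
      have heq : ∑ i ∈ insert t Q, a i * x i = ∑ i ∈ insert t Q, a i := by
        apply Finset.sum_congr rfl
        intro i hi
        rcases Finset.mem_insert.mp hi with h | h
        · rw [h, hxt, mul_one]
        · rw [(Finset.mem_filter.mp (hQT h)).2, mul_one]
      linarith [heq ▸ hle]
end

section
/- For a knapsack constraint aᵀx ≤ b with a₁ ≤ a₂ ≤ ... ≤ aₙ, a set N ∪ {t} ⊆ [n] (with t ∉ N, 2 ≤ k ≤ |N|) is a (1,k)-configuration if and only if: a(N) ≤ b, a_t + a(N^{[k-1]}) ≤ b, and a_t + a(N_{[k]}) > b, where N^{[k-1]} denotes the k-1 largest elements of N and N_{[k]} the k smallest elements of N. -/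
open Finset

/-- The set of the `k` smallest elements of `N` (with respect to the index ordering). -/
def lowK {n : ℕ} (N : Finset (Fin n)) (k : ℕ) : Finset (Fin n) :=
  ((N.sort (· ≤ ·)).take k).toFinset

/-- The set of the `k` largest elements of `N` (with respect to the index ordering). -/
def highK {n : ℕ} (N : Finset (Fin n)) (k : ℕ) : Finset (Fin n) :=
  ((N.sort (· ≤ ·)).drop (N.card - k)).toFinset

/-!
Since `a` is monotone, among the `k`-subsets `Q ⊆ N` the weight `a(Q)` is smallest for `N_{[k]}`
and largest for `N^{[k]}`. Hence every `Q ∪ {t}` is a cover iff `N_{[k]} ∪ {t}` is one. As for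
minimality, dropping `t` leaves `a(Q) ≤ a(N) ≤ b`, while dropping some `j ∈ Q` leaves `t` together
with a `(k-1)`-subset of `N`, the heaviest of which is `N^{[k-1]}`; it can be realised as `Q ∖ {j}`
because `k - 1 < |N|`.
-/

namespace List

variable {β : Type*} [AddCommMonoid β] [PartialOrder β] [IsOrderedAddMonoid β]

theorem Sublist.sum_take_length_le_sum {M L : List β} (h : M <+ L)
    (hL : L.Pairwise (· ≤ ·)) : (L.take M.length).sum ≤ M.sum := by
  induction h with
  | slnil => simp
  | @cons M L x h ih =>
    cases M with
    | nil => simp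
    | cons y M =>
      have hlen : M.length + 1 ≤ L.length := h.length_le
      have hx : x ≤ L[M.length] := rel_of_pairwise_cons hL (getElem_mem hlen)
      calc ((x :: L).take (M.length + 1)).sum = x + (L.take M.length).sum := by simp
        _ ≤ L[M.length] + (L.take M.length).sum := add_le_add_left hx _
        _ = (L.take (M.length + 1)).sum := by rw [sum_take_succ _ _ hlen, add_comm]
        _ ≤ (y :: M).sum := ih hL.of_cons
  | @cons_cons M L x h ih => simpa using add_le_add_right (ih hL.of_cons) x

end List

section LowHigh

variable {n : ℕ} (N : Finset (Fin n))

lemma lowK_subset (k : ℕ) : lowK N k ⊆ N := fun x hx => by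
  rw [lowK, List.mem_toFinset] at hx
  exact (mem_sort _).1 (List.take_subset _ _ hx)

lemma highK_subset (k : ℕ) : highK N k ⊆ N := fun x hx => by
  rw [highK, List.mem_toFinset] at hx
  exact (mem_sort _).1 (List.drop_subset _ _ hx)

lemma card_lowK {k : ℕ} (hk : k ≤ #N) : #(lowK N k) = k := by
  rw [lowK, List.toFinset_card_of_nodup ((sort_nodup _ _).sublist (List.take_sublist _ _)),
    List.length_take, length_sort]
  omega

lemma card_highK {k : ℕ} (hk : k ≤ #N) : #(highK N k) = k := by
  rw [highK, List.toFinset_card_of_nodup ((sort_nodup _ _).sublist (List.drop_sublist _ _)),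
    List.length_drop, length_sort]
  omega

variable {β : Type*} [AddCommMonoid β] (a : Fin n → β)

lemma sum_eq_sum_map_sort : ∑ i ∈ N, a i = ((N.sort (· ≤ ·)).map a).sum := by
  conv_lhs => rw [← sort_toFinset N (· ≤ ·)]
  rw [List.sum_toFinset _ (sort_nodup _ _)]

lemma sum_lowK (k : ℕ) : ∑ i ∈ lowK N k, a i = (((N.sort (· ≤ ·)).map a).take k).sum := by
  rw [lowK, List.sum_toFinset _ ((sort_nodup _ _).sublist (List.take_sublist _ _)),
    List.map_take]

lemma sum_highK (k : ℕ) :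
    ∑ i ∈ highK N k, a i = (((N.sort (· ≤ ·)).map a).drop (#N - k)).sum := by
  rw [highK, List.sum_toFinset _ ((sort_nodup _ _).sublist (List.drop_sublist _ _)),
    List.map_drop]

lemma sum_lowK_add_sum_highK (k : ℕ) :
    ∑ i ∈ lowK N (#N - k), a i + ∑ i ∈ highK N k, a i = ∑ i ∈ N, a i := by
  rw [sum_lowK, sum_highK, List.sum_take_add_sum_drop, sum_eq_sum_map_sort]

variable [PartialOrder β] [IsOrderedCancelAddMonoid β] {a} (hmono : Monotone a)
include hmono

lemma sum_lowK_card_le_sum {Q : Finset (Fin n)} (hQ : Q ⊆ N) :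
    ∑ i ∈ lowK N #Q, a i ≤ ∑ i ∈ Q, a i := by
  have hsorted : ((N.sort (· ≤ ·)).map a).Pairwise (· ≤ ·) :=
    (pairwise_sort _ _).map a fun _ _ h => hmono h
  have hsub : (Q.sort (· ≤ ·)).Sublist (N.sort (· ≤ ·)) :=
    List.sublist_of_subperm_of_pairwise
      ((sort_nodup _ _).subperm fun x hx => (mem_sort _).2 (hQ ((mem_sort _).1 hx)))
      (pairwise_sort _ _) (pairwise_sort _ _)
  simpa [sum_lowK, ← sum_eq_sum_map_sort] using (hsub.map a).sum_take_length_le_sum hsorted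

lemma sum_le_sum_highK_card {Q : Finset (Fin n)} (hQ : Q ⊆ N) :
    ∑ i ∈ Q, a i ≤ ∑ i ∈ highK N #Q, a i := by
  have hmin := sum_lowK_card_le_sum N hmono (sdiff_subset (s := N) (t := Q))
  rw [card_sdiff_of_subset hQ] at hmin
  refine le_of_add_le_add_left (a := ∑ i ∈ lowK N (#N - #Q), a i) ?_
  calc _ ≤ ∑ i ∈ N \ Q, a i + ∑ i ∈ Q, a i := add_le_add_left hmin _
    _ = _ := by rw [sum_sdiff hQ, sum_lowK_add_sum_highK]

end LowHigh

section Configuration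

variable {n : ℕ} {β : Type*} [AddCommMonoid β] [PartialOrder β] [IsOrderedCancelAddMonoid β]
  {a : Fin n → β} {b : β} {N : Finset (Fin n)} {t : Fin n} {k : ℕ}

lemma forall_lt_sum_insert_iff (hmono : Monotone a) (ht : t ∉ N) (hkN : k ≤ #N) :
    (∀ Q ⊆ N, #Q = k → b < ∑ i ∈ insert t Q, a i) ↔ b < a t + ∑ i ∈ lowK N k, a i := by
  constructor
  · intro h
    simpa [sum_insert (notMem_mono (lowK_subset N k) ht)] using
      h _ (lowK_subset N k) (card_lowK N hkN)
  · rintro h Q hQ rfl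
    rw [sum_insert (notMem_mono hQ ht)]
    exact h.trans_le (add_le_add_right (sum_lowK_card_le_sum N hmono hQ) _)

lemma forall_sum_erase_insert_le_iff (ha : ∀ i, 0 ≤ a i) (hmono : Monotone a)
    (hN : ∑ i ∈ N, a i ≤ b) (ht : t ∉ N) (hk : 0 < k) (hkN : k ≤ #N) :
    (∀ Q ⊆ N, #Q = k → ∀ j ∈ insert t Q, ∑ i ∈ (insert t Q).erase j, a i ≤ b) ↔
      a t + ∑ i ∈ highK N (k - 1), a i ≤ b := by
  set H := highK N (k - 1)
  have hHN : H ⊆ N := highK_subset N (k - 1)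
  have hH : #H = k - 1 := card_highK N (by omega)
  have htH : t ∉ H := notMem_mono hHN ht
  constructor
  · intro h
    obtain ⟨j, hjN, hjH⟩ : ∃ j ∈ N, j ∉ H := exists_mem_notMem_of_card_lt_card (by omega)
    have hjt : j ≠ t := ne_of_mem_of_not_mem hjN ht
    have hQ : #(insert j H) = k := by rw [card_insert_of_notMem hjH]; omega
    have := h (insert j H) (insert_subset hjN hHN) hQ j (mem_insert_of_mem (mem_insert_self j H))
    rwa [insert_comm, erase_insert (by simp [hjt, hjH]), sum_insert htH] at this
  · rintro h Q hQ rfl j hj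
    have htQ : t ∉ Q := notMem_mono hQ ht
    rcases mem_insert.1 hj with rfl | hjQ
    · rw [erase_insert htQ]
      exact (sum_le_sum_of_subset_of_nonneg hQ fun i _ _ => ha i).trans hN
    · have hQj : Q.erase j ⊆ N := (erase_subset j Q).trans hQ
      rw [erase_insert_of_ne (ne_of_mem_of_not_mem hjQ htQ).symm,
        sum_insert (notMem_mono (erase_subset j Q) htQ)]
      calc a t + ∑ i ∈ Q.erase j, a i ≤ a t + ∑ i ∈ highK N #(Q.erase j), a i :=
            add_le_add_right (sum_le_sum_highK_card N hmono hQj) _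
        _ ≤ b := by rwa [card_erase_of_mem hjQ]

end Configuration

theorem config_characterization_general {n : ℕ} (a : Fin n → ℤ) (ha : ∀ i, 0 ≤ a i)
    (hmono : Monotone a) (b : ℤ)
    (N : Finset (Fin n)) (t : Fin n) (ht : t ∉ N)
    (k : ℕ) (hk2 : 2 ≤ k) (hkN : k ≤ N.card) :
    ((∑ i ∈ N, a i ≤ b) ∧
      (∀ Q ⊆ N, Q.card = k →
        (b < ∑ i ∈ insert t Q, a i ∧
          ∀ j ∈ insert t Q, ∑ i ∈ (insert t Q).erase j, a i ≤ b)))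
    ↔ ((∑ i ∈ N, a i ≤ b) ∧
        a t + ∑ i ∈ highK N (k - 1), a i ≤ b ∧
        b < a t + ∑ i ∈ lowK N k, a i) := by
  refine and_congr_right fun hN => ?_
  simp only [imp_and, forall_and]
  rw [forall_lt_sum_insert_iff hmono ht hkN,
    forall_sum_erase_insert_le_iff ha hmono hN ht (by omega) hkN, and_comm]

theorem config_characterization {n : ℕ} (a : Fin n → ℤ) (ha : ∀ i, 0 ≤ a i)
    (hmono : Monotone a) (b : ℤ) (hb : 0 ≤ b)
    (N : Finset (Fin n)) (t : Fin n) (ht : t ∉ N)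
    (k : ℕ) (hk2 : 2 ≤ k) (hkN : k ≤ N.card) :
    ((∑ i ∈ N, a i ≤ b) ∧
      (∀ Q ⊆ N, Q.card = k →
        (b < ∑ i ∈ insert t Q, a i ∧
          ∀ j ∈ insert t Q, ∑ i ∈ (insert t Q).erase j, a i ≤ b)))
    ↔ ((∑ i ∈ N, a i ≤ b) ∧
        a t + ∑ i ∈ highK N (k - 1), a i ≤ b ∧
        b < a t + ∑ i ∈ lowK N k, a i) :=
  config_characterization_general a ha hmono b N t ht k hk2 hkN
end

section
/- Let N ∪ {t} be a generalized (1,k)-configuration for the knapsack constraint aᵀx ≤ b, and let n' be an integer such that ∑_{i∈N} x_i ≤ n' holds for all x ∈ {0,1}ⁿ with aᵀx ≤ b. Then every x ∈ {0,1}ⁿ with aᵀx ≤ b satisfies (n' - k + 1)·x_t + ∑_{i∈N} x_i ≤ n'. -/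
/-!
If `x t = 0` the inequality is the valid inequality `∑_{i ∈ N} x i ≤ n'`. If `x t = 1`, the
items of `N` packed by `x` number at most `k - 1`: any `k` of them together with `t` form a
cover, which `x` cannot contain. Hence `∑_{i ∈ N} x i ≤ k - 1`, which is the claim.
-/

open Finset

variable {ι : Type*}

lemma sum_eq_card_filter_eq_one {s : Finset ι} {x : ι → ℤ} (hx : ∀ i ∈ s, x i = 0 ∨ x i = 1) :
    ∑ i ∈ s, x i = #(s.filter (x · = 1)) := by
  rw [natCast_card_filter]
  refine sum_congr rfl fun i hi => ?_
  rcases hx i hi with h | h <;> simp [h]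

lemma sum_le_sum_mul_of_forall_eq_one {R : Type*} [Semiring R] [PartialOrder R]
    [IsOrderedRing R] [Fintype ι] {a x : ι → R} (ha : ∀ i, 0 ≤ a i) (hx : ∀ i, 0 ≤ x i)
    {s : Finset ι} (hs : ∀ i ∈ s, x i = 1) :
    ∑ i ∈ s, a i ≤ ∑ i, a i * x i :=
  calc ∑ i ∈ s, a i = ∑ i ∈ s, a i * x i := sum_congr rfl fun i hi => by rw [hs i hi, mul_one]
    _ ≤ ∑ i, a i * x i :=
      sum_le_sum_of_subset_of_nonneg (subset_univ s) fun i _ _ => mul_nonneg (ha i) (hx i)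

lemma card_filter_eq_one_lt_of_config [Fintype ι] [DecidableEq ι] {a x : ι → ℤ} {b : ℤ}
    {N : Finset ι} {t : ι} {k : ℕ} (hconfig : ∀ Q ⊆ N, #Q = k → b < ∑ i ∈ insert t Q, a i)
    (ha : ∀ i, 0 ≤ a i) (hx : ∀ i, 0 ≤ x i) (hfeas : ∑ i, a i * x i ≤ b) (hxt : x t = 1) :
    #(N.filter (x · = 1)) < k := by
  by_contra! hk
  obtain ⟨Q, hQS, hQcard⟩ := exists_subset_card_eq hk
  have hQ : ∀ i ∈ insert t Q, x i = 1 := by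
    simp only [mem_insert, forall_eq_or_imp]
    exact ⟨hxt, fun i hi => (mem_filter.mp (hQS hi)).2⟩
  have hcover := hconfig Q (hQS.trans (filter_subset _ _)) hQcard
  have hpacked := sum_le_sum_mul_of_forall_eq_one ha hx hQ
  omega

theorem generalized_config_inequality_valid_general {n : ℕ} (a : Fin n → ℤ) (ha : ∀ i, 0 ≤ a i)
    (b : ℤ)
    (N : Finset (Fin n)) (t : Fin n)
    (k : ℕ)
    (hconfig : ∀ Q ⊆ N, Q.card = k → b < ∑ i ∈ insert t Q, a i)
    (n' : ℤ)
    (hvalid : ∀ y : Fin n → ℤ, (∀ i, y i = 0 ∨ y i = 1) → ∑ i, a i * y i ≤ b →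
      ∑ i ∈ N, y i ≤ n')
    (x : Fin n → ℤ) (hx : ∀ i, x i = 0 ∨ x i = 1)
    (hfeas : ∑ i, a i * x i ≤ b) :
    (n' - k + 1) * x t + ∑ i ∈ N, x i ≤ n' := by
  rcases hx t with hxt | hxt
  · simpa [hxt] using hvalid x hx hfeas
  · have hx_nonneg : ∀ i, 0 ≤ x i := fun i => by rcases hx i with h | h <;> simp [h]
    have hcard := card_filter_eq_one_lt_of_config hconfig ha hx_nonneg hfeas hxt
    rw [sum_eq_card_filter_eq_one fun i _ => hx i, hxt]
    omega

theorem generalized_config_inequality_valid {n : ℕ} (a : Fin n → ℤ) (ha : ∀ i, 0 ≤ a i)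
    (b : ℤ) (hb : 0 ≤ b)
    (N : Finset (Fin n)) (t : Fin n) (ht : t ∉ N) (hNproper : N ≠ Finset.univ)
    (k : ℕ) (hkN : k ≤ N.card)
    (hconfig : ∀ Q ⊆ N, Q.card = k → b < ∑ i ∈ insert t Q, a i)
    (n' : ℤ)
    (hvalid : ∀ y : Fin n → ℤ, (∀ i, y i = 0 ∨ y i = 1) → ∑ i, a i * y i ≤ b →
      ∑ i ∈ N, y i ≤ n')
    (x : Fin n → ℤ) (hx : ∀ i, x i = 0 ∨ x i = 1)
    (hfeas : ∑ i, a i * x i ≤ b) :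
    (n' - k + 1) * x t + ∑ i ∈ N, x i ≤ n' :=
  generalized_config_inequality_valid_general a ha b N t k hconfig n' hvalid x hx hfeas
end

section
/- If P ⊆ [n] is a pack for the knapsack constraint aᵀx ≤ b, then every x ∈ {0,1}ⁿ with aᵀx ≤ b satisfies the weight inequality ∑_{i∈P} a_i x_i + ∑_{j∉P} max{a_j - r(P), 0}·x_j ≤ ∑_{i∈P} a_i, where r(P) := b - ∑_{i∈P} a_i. -/
open Finset

theorem weight_inequality_valid {n : ℕ} (a : Fin n → ℤ) (ha : ∀ i, 0 ≤ a i)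
    (b : ℤ) (hb : 0 ≤ b)
    (P : Finset (Fin n)) (hP : ∑ i ∈ P, a i ≤ b)
    (x : Fin n → ℤ) (hx : ∀ i, x i = 0 ∨ x i = 1)
    (hfeas : ∑ i, a i * x i ≤ b) :
    ∑ i ∈ P, a i * x i
      + ∑ j ∈ Finset.univ \ P, max (a j - (b - ∑ i ∈ P, a i)) 0 * x j
      ≤ ∑ i ∈ P, a i := by
  set S := ∑ i ∈ P, a i with hS
  set r := b - S with hr
  have hr0 : 0 ≤ r := by omega
  set T := (Finset.univ \ P).filter (fun j => x j = 1 ∧ r < a j) with hT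
  have hPle : ∑ i ∈ P, a i * x i ≤ S := by
    apply Finset.sum_le_sum
    intro i _
    rcases hx i with h | h <;> rw [h] <;> [simpa using ha i; simp]
  have hsum : ∑ j ∈ Finset.univ \ P, max (a j - r) 0 * x j = ∑ j ∈ T, (a j - r) := by
    rw [hT, Finset.sum_filter]
    apply Finset.sum_congr rfl
    intro j _
    rcases hx j with h | h <;> rw [h] <;> split_ifs with hc
    · omega
    · simp
    · rw [max_eq_left (by omega)]; ring
    · rw [max_eq_right (by omega)]; ring
  rw [hsum]
  rcases T.eq_empty_or_nonempty with he | hne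
  · rw [he]; simpa using hPle
  · have hcard : 1 ≤ (T.card : ℤ) := by
      have := Finset.card_pos.mpr hne
      exact_mod_cast this
    have h1 : ∑ j ∈ T, (a j - r) = ∑ j ∈ T, a j - T.card * r := by
      rw [Finset.sum_sub_distrib, Finset.sum_const, nsmul_eq_mul]
    have h2 : ∑ j ∈ T, a j ≤ ∑ j ∈ Finset.univ \ P, a j * x j := by
      have : ∑ j ∈ T, a j = ∑ j ∈ T, a j * x j := by
        apply Finset.sum_congr rfl
        intro j hj
        rw [hT, Finset.mem_filter] at hj
        rw [hj.2.1, mul_one]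
      rw [this]
      apply Finset.sum_le_sum_of_subset_of_nonneg (Finset.filter_subset _ _)
      intro j _ _
      rcases hx j with h | h <;> rw [h] <;> [simp; simpa using ha j]
    have h3 : ∑ i ∈ P, a i * x i + ∑ j ∈ Finset.univ \ P, a j * x j = ∑ i, a i * x i := by
      rw [add_comm]
      exact Finset.sum_sdiff (Finset.subset_univ P)
    nlinarith [hfeas]
end

section
/- Let a ∈ ℤ₊ⁿ, b ∈ ℤ₊ with a([n])/b ∉ ℤ, and let x* be the constant vector with all entries b/a([n]). If there exists a pack P' with r(P') > 0, P' ∪ C(P') = [n], and |C(P')| = ⌊a([n])/b⌋, then the weight inequality of P' is violated by x*: ∑_{i∈P'} a_i x*_i + ∑_{j∈C(P')} (a_j - r(P')) x*_j > a(P'). -/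
open Finset

/-- `C(P)`: indices outside the pack `P` whose weight exceeds the residual capacity. -/
def packC {n : ℕ} (a : Fin n → ℤ) (b : ℤ) (P : Finset (Fin n)) : Finset (Fin n) :=
  (Finset.univ \ P).filter (fun j => b - ∑ i ∈ P, a i < a j)

theorem wi_separation_sufficient {n : ℕ} (a : Fin n → ℤ) (ha : ∀ i, 0 ≤ a i)
    (b : ℤ) (hb : 0 < b) (hnd : ¬ b ∣ ∑ i, a i)
    (P : Finset (Fin n)) (hP : ∑ i ∈ P, a i ≤ b)
    (hr : 0 < b - ∑ i ∈ P, a i)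
    (hcov : P ∪ packC a b P = Finset.univ)
    (hcard : ((packC a b P).card : ℤ) = (∑ i, a i) / b) :
    ∑ i ∈ P, (a i : ℚ) * ((b : ℚ) / (∑ i, (a i : ℚ)))
      + ∑ j ∈ packC a b P,
          ((a j : ℚ) - ((b : ℚ) - ∑ i ∈ P, (a i : ℚ))) * ((b : ℚ) / (∑ i, (a i : ℚ)))
      > ∑ i ∈ P, (a i : ℚ) := by
  set S : ℤ := ∑ i, a i with hS
  have hS0 : 0 ≤ S := Finset.sum_nonneg fun i _ => ha i
  have hSpos : 0 < S := by
    rcases hS0.lt_or_eq with h | h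
    · exact h
    · exact absurd (h ▸ dvd_zero b) hnd
  have hCeq : packC a b P = Finset.univ \ P := by
    apply Finset.Subset.antisymm
    · exact Finset.filter_subset _ _
    · intro i hi
      have hmem : i ∈ P ∪ packC a b P := hcov ▸ Finset.mem_univ i
      rcases Finset.mem_union.mp hmem with h | h
      · exact absurd h (Finset.mem_sdiff.mp hi).2
      · exact h
  have hCsum : ∑ j ∈ packC a b P, a j = S - ∑ i ∈ P, a i := by
    rw [hCeq, Finset.sum_sdiff_eq_sub (Finset.subset_univ P)]
  have hrem : 0 < S % b := by
    rcases (Int.emod_nonneg S (ne_of_gt hb)).lt_or_eq with h | h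
    · exact h
    · exact absurd (Int.dvd_of_emod_eq_zero h.symm) hnd
  have hkb : ((packC a b P).card : ℤ) * b < S := by
    rw [hcard]
    have hde := Int.mul_ediv_add_emod S b
    nlinarith [hde]
  -- pass to ℚ
  have hSq : (∑ i, (a i : ℚ)) = (S : ℚ) := by push_cast [hS]; ring
  set k : ℚ := ((packC a b P).card : ℚ)
  set Aq : ℚ := ∑ i ∈ P, (a i : ℚ)
  have hAq : Aq = ((∑ i ∈ P, a i : ℤ) : ℚ) := by push_cast [Aq]; ring
  have hCq : ∑ j ∈ packC a b P, (a j : ℚ) = (S : ℚ) - Aq := by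
    have h := congrArg (fun z : ℤ => (z : ℚ)) hCsum
    push_cast at h
    exact h
  set c : ℚ := (b : ℚ) / (∑ i, (a i : ℚ)) with hc
  have hsum1 : ∑ i ∈ P, (a i : ℚ) * c = Aq * c := by rw [← Finset.sum_mul]
  have hsum2 : ∑ j ∈ packC a b P, ((a j : ℚ) - ((b : ℚ) - Aq)) * c
      = ((S : ℚ) - Aq - k * ((b : ℚ) - Aq)) * c := by
    rw [← Finset.sum_mul, Finset.sum_sub_distrib, hCq, Finset.sum_const, nsmul_eq_mul]
  rw [hsum1, hsum2, hc, hSq]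
  have hSqpos : (0 : ℚ) < (S : ℚ) := by exact_mod_cast hSpos
  have hrq : (0 : ℚ) < (b : ℚ) - Aq := by
    rw [hAq]; exact_mod_cast hr
  have hkbq : k * (b : ℚ) < (S : ℚ) := by simp only [k]; exact_mod_cast hkb
  rw [gt_iff_lt, ← sub_pos]
  have hkey : Aq * ((b : ℚ) / (S : ℚ)) + ((S : ℚ) - Aq - k * ((b : ℚ) - Aq)) * ((b : ℚ) / (S : ℚ)) - Aq
      = (((b : ℚ) - Aq) * ((S : ℚ) - k * (b : ℚ))) / (S : ℚ) := by
    field_simp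
    ring
  rw [hkey]
  exact div_pos (mul_pos hrq (by linarith)) hSqpos
end

section
/- Let P be a pack for aᵀx ≤ b and x* ∈ [0,1]ⁿ with aᵀx* ≤ b. If the weight inequality of P is violated at x* (f(P) > 0), then r(P) > 0 and ∑_{j∈C(P)} x*_j < 1. -/
open Finset

/-- `f(P)`: violation of the weight inequality of `P` at the point `x`. -/
def fval {n : ℕ} (a : Fin n → ℤ) (b : ℤ) (x : Fin n → ℚ) (P : Finset (Fin n)) : ℚ :=
  ∑ i ∈ P, (a i : ℚ) * x i
    + ∑ j ∈ packC a b P, ((a j : ℚ) - ((b : ℚ) - ∑ i ∈ P, (a i : ℚ))) * x j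
    - ∑ i ∈ P, (a i : ℚ)

theorem violated_wi_necessary_conditions {n : ℕ} (a : Fin n → ℤ) (ha : ∀ i, 0 ≤ a i)
    (b : ℤ) (hb : 0 ≤ b)
    (x : Fin n → ℚ) (hx0 : ∀ i, 0 ≤ x i) (hx1 : ∀ i, x i ≤ 1)
    (hfeas : ∑ i, (a i : ℚ) * x i ≤ b)
    (P : Finset (Fin n)) (hP : ∑ i ∈ P, a i ≤ b)
    (hf : 0 < fval a b x P) :
    0 < b - ∑ i ∈ P, a i ∧ ∑ j ∈ packC a b P, x j < 1 := by
  set C := packC a b P with hCdef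
  set rQ : ℚ := (b : ℚ) - ∑ i ∈ P, (a i : ℚ) with hr
  set s : ℚ := ∑ j ∈ C, x j with hs
  have hdisj : Disjoint P C := by
    have : C ⊆ univ \ P := Finset.filter_subset _ _
    exact (Finset.disjoint_sdiff.mono_right this)
  have hsum : ∑ i ∈ P, (a i : ℚ) * x i + ∑ j ∈ C, (a j : ℚ) * x j
      ≤ ∑ i, (a i : ℚ) * x i := by
    rw [← Finset.sum_union hdisj]
    apply Finset.sum_le_sum_of_subset_of_nonneg (Finset.subset_univ _)
    intro i _ _
    exact mul_nonneg (by exact_mod_cast ha i) (hx0 i)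
  have hfle : fval a b x P ≤ rQ * (1 - s) := by
    have hexp : fval a b x P
        = (∑ i ∈ P, (a i : ℚ) * x i + ∑ j ∈ C, (a j : ℚ) * x j) - rQ * s
          - ∑ i ∈ P, (a i : ℚ) := by
      simp only [fval, hr, hs, sub_mul, Finset.sum_sub_distrib, Finset.mul_sum]
      ring
    rw [hexp]
    have := hsum.trans hfeas
    nlinarith [this]
  have hs0 : 0 ≤ s := Finset.sum_nonneg fun j _ => hx0 j
  have hr0 : (0 : ℚ) ≤ rQ := by
    have : (∑ i ∈ P, (a i : ℚ)) ≤ (b : ℚ) := by exact_mod_cast hP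
    linarith
  have hprod : 0 < rQ * (1 - s) := lt_of_lt_of_le hf hfle
  have hrpos : 0 < rQ := by
    rcases hr0.lt_or_eq with h | h
    · exact h
    · exfalso; rw [← h, zero_mul] at hprod; exact lt_irrefl _ hprod
  constructor
  · have : (0 : ℚ) < (b : ℚ) - ∑ i ∈ P, (a i : ℚ) := hrpos
    have : (0 : ℚ) < ((b - ∑ i ∈ P, a i : ℤ) : ℚ) := by push_cast; linarith
    exact_mod_cast this
  · nlinarith
end

section
/- Let x* ∈ [0,1]ⁿ be feasible for aᵀx ≤ b and suppose (|S|-k+1)x*_t + ∑_{i∈S} x*_i > |S| for a (1,k)-configuration S ∪ {t} (with t ∉ S, |S| ≥ k). Then there exists S* ⊆ S such that S* ∪ {t} is a (1,k)-configuration whose (1,k)-configuration inequality is violated by x*, and x*_i > 0 for every i ∈ S* ∪ {t}. -/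
open Finset

theorem config_positive_support {n : ℕ} (a : Fin n → ℤ) (ha : ∀ i, 0 ≤ a i)
    (b : ℤ) (hb : 0 ≤ b)
    (S : Finset (Fin n)) (t : Fin n) (ht : t ∉ S)
    (k : ℕ) (hk2 : 2 ≤ k) (hkS : k ≤ S.card)
    (haS : ∑ i ∈ S, a i ≤ b)
    (hconf : ∀ Q ⊆ S, Q.card = k →
      (b < ∑ i ∈ insert t Q, a i ∧
        ∀ j ∈ insert t Q, ∑ i ∈ (insert t Q).erase j, a i ≤ b))
    (x : Fin n → ℚ) (hx0 : ∀ i, 0 ≤ x i) (hx1 : ∀ i, x i ≤ 1)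
    (hfeas : ∑ i, (a i : ℚ) * x i ≤ b)
    (hviol : ((S.card : ℚ) - k + 1) * x t + ∑ i ∈ S, x i > (S.card : ℚ)) :
    ∃ S' ⊆ S, k ≤ S'.card ∧
      (∑ i ∈ S', a i ≤ b) ∧
      (∀ Q ⊆ S', Q.card = k →
        (b < ∑ i ∈ insert t Q, a i ∧
          ∀ j ∈ insert t Q, ∑ i ∈ (insert t Q).erase j, a i ≤ b)) ∧
      ((S'.card : ℚ) - k + 1) * x t + ∑ i ∈ S', x i > (S'.card : ℚ) ∧
      ∀ i ∈ insert t S', 0 < x i := by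
  classical
  set S' := S.filter (fun i => 0 < x i) with hS'
  have hsub : S' ⊆ S := filter_subset _ _
  have hsum_eq : ∑ i ∈ S', x i = ∑ i ∈ S, x i := by
    refine Finset.sum_subset hsub ?_
    intro i hi hni
    simp only [hS', mem_filter] at hni
    have hnp : ¬ 0 < x i := fun h => hni ⟨hi, h⟩
    linarith [hx0 i]
  have hcard : S'.card ≤ S.card := card_le_card hsub
  have hcardQ : (S'.card : ℚ) ≤ (S.card : ℚ) := by exact_mod_cast hcard
  have hkQ : (k : ℚ) ≤ (S.card : ℚ) := by exact_mod_cast hkS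
  have hsum_le : ∑ i ∈ S', x i ≤ (S'.card : ℚ) := by
    calc ∑ i ∈ S', x i ≤ ∑ i ∈ S', (1:ℚ) := sum_le_sum (fun i _ => hx1 i)
    _ = S'.card := by simp
  have hxt1 := hx1 t
  have hxt0 := hx0 t
  have hkS' : k ≤ S'.card := by
    have hco : (0:ℚ) ≤ (S.card:ℚ) - k + 1 := by linarith
    have h1 : (k:ℚ) - 1 < (S'.card : ℚ) := by
      nlinarith [mul_nonneg hco (by linarith : (0:ℚ) ≤ 1 - x t)]
    have h2 : k < S'.card + 1 := by
      exact_mod_cast (by push_cast; linarith : (k:ℚ) < ((S'.card + 1 : ℕ) : ℚ))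
    omega
  have hxtpos : 0 < x t := by
    by_contra h
    push_neg at h
    nlinarith [hviol]
  refine ⟨S', hsub, hkS', ?_, ?_, ?_, ?_⟩
  · calc ∑ i ∈ S', a i ≤ ∑ i ∈ S, a i :=
        Finset.sum_le_sum_of_subset_of_nonneg hsub (fun i _ _ => ha i)
    _ ≤ b := haS
  · intro Q hQ hQk
    exact hconf Q (hQ.trans hsub) hQk
  · nlinarith [mul_nonneg (by linarith : (0:ℚ) ≤ (S.card:ℚ) - S'.card)
      (by linarith : (0:ℚ) ≤ 1 - x t)]
  · intro i hi
    rcases mem_insert.mp hi with rfl | hi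
    · exact hxtpos
    · exact (mem_filter.mp hi).2
end
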